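/- Let ξ and t be indeterminates and let Φ : ℂ[x,y] → ℂ[ξ][t,t⁻¹] be the ℂ-algebra homomorphism with Φ(x) = t² and Φ(y) = t⁵ + t⁻² + ξt⁻³ (Φ is injective). For nonzero f ∈ ℂ[x,y] define δ(f) := deg_t(Φ(f)), the largest exponent of t occurring in Φ(f). Then {δ(f) : f ∈ ℂ[x,y] \ ℂ} = {m ∈ ℤ : m ≥ 2}. (In particular the semigroup of values of δ on ℂ[x,y] coincides with that of the weighted degree δ' with δ'(x) = 2, δ'(y) = 3, even though δ' determines a normal algebraic compactification of ℂ² while δ determines only an analytic, non-algebraic, one.) -/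

import Mathlib

open Polynomial LaurentPolynomial

noncomputable section

set_option maxHeartbeats 1000000
set_option synthInstance.maxHeartbeats 400000

/-- The polynomial ring `ℂ[x,y]`, with `x = X 0` and `y = X 1`. -/
abbrev Pxy : Type := MvPolynomial (Fin 2) ℂ

/-- The Laurent polynomial ring `ℂ[ξ][t,t⁻¹]` (`ξ = Polynomial.X`). -/
abbrev LPt : Type := LaurentPolynomial (Polynomial ℂ)

/-- For a nonzero `h ∈ ℂ[ξ][t,t⁻¹]`, the largest exponent of `t` occurring in `h`. -/
def degt (h : LPt) : ℤ := sSup {k : ℤ | AddMonoidAlgebra.coeff h k ≠ 0}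

/-- The ℂ-algebra homomorphism `Φ : ℂ[x,y] → ℂ[ξ][t,t⁻¹]` with `Φ x = t²` and
`Φ y = t⁵ + t⁻² + ξ t⁻³`. -/
noncomputable def Phi : Pxy →ₐ[ℂ] LPt :=
  MvPolynomial.aeval
    ![LaurentPolynomial.T 2,
      LaurentPolynomial.T 5 + LaurentPolynomial.T (-2) +
        LaurentPolynomial.C Polynomial.X * LaurentPolynomial.T (-3)]


/-!
Write `f ∈ ℂ[x][y]` in its `(y² - x⁵)`-adic expansion with coefficients linear in `y`.
The substitution `ξ ↦ ξ t` sends `Φ y` to `t⁵ + (1 + ξ) t⁻²` and `Φ (y² - x⁵)` to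
`2 (1 + ξ) t³ + ⋯`. After it, leading terms cannot cancel: the image of a coefficient `a + b y`
has a constant leading coefficient (its degree `2 deg a` or `2 deg b + 5` is decided by parity),
while each factor `y² - x⁵` adds `3` to the degree and `1` to the `ξ`-degree of the leading
coefficient. So the twisted image of a non-constant `f` has a leading term `w t^M` with
`M - deg w ≥ 2`. As the substitution moves `ξ^e t^k` to `ξ^e t^(k+e)`, `Φ f` itself has a
nonzero coefficient at `t^(M - deg w)`, whence `δ f ≥ 2`; the same leading term shows that `Φ`
is injective. Conversely `δ (x^a (y² - x⁵)^b) = 2a + 3b` takes every value `≥ 2`.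
-/

namespace LaurentPolynomial

section TopTerm

variable {R : Type*} [Semiring R]

theorem coeff_eq_zero_of_degree_lt {p : R[T;T⁻¹]} {n : ℤ} (h : p.degree < n) :
    p.coeff n = 0 := by
  by_contra hne
  exact not_le.2 h (Finset.le_max (Finsupp.mem_support_iff.2 hne))

theorem degree_le_iff_coeff_eq_zero {p : R[T;T⁻¹]} {n : ℤ} :
    p.degree ≤ n ↔ ∀ k, n < k → p.coeff k = 0 := by
  refine ⟨fun h k hk => coeff_eq_zero_of_degree_lt (h.trans_lt (WithBot.coe_lt_coe.2 hk)),
    fun h => Finset.max_le fun k hk => ?_⟩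
  by_contra hlt
  exact Finsupp.mem_support_iff.1 hk (h k (WithBot.coe_lt_coe.1 (not_le.1 hlt)))

theorem degree_add_le (p q : R[T;T⁻¹]) : (p + q).degree ≤ max p.degree q.degree :=
  AddMonoidAlgebra.supDegree_add_le

theorem degree_mul_le (p q : R[T;T⁻¹]) : (p * q).degree ≤ p.degree + q.degree :=
  AddMonoidAlgebra.supDegree_mul_le fun _ _ => WithBot.coe_add _ _

/-- `p = r T n + (terms of lower degree)`, where `r` may vanish. -/
def HasTopTerm (p : R[T;T⁻¹]) (n : ℤ) (r : R) : Prop :=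
  p.degree ≤ n ∧ p.coeff n = r

theorem hasTopTerm_C_mul_T (r : R) (n : ℤ) : HasTopTerm (C r * T n) n r :=
  ⟨degree_C_mul_T_le n r, by
    rw [← single_eq_C_mul_T, AddMonoidAlgebra.coeff_single, Finsupp.single_eq_same]⟩

theorem hasTopTerm_T (n : ℤ) : HasTopTerm (T n : R[T;T⁻¹]) n 1 := by
  simpa using hasTopTerm_C_mul_T (1 : R) n

theorem hasTopTerm_C (r : R) : HasTopTerm (C r) 0 r := by
  simpa using hasTopTerm_C_mul_T r 0

namespace HasTopTerm

variable {p q : R[T;T⁻¹]} {m n : ℤ} {r s : R}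

theorem degree_lt (h : HasTopTerm p m r) (hmn : m < n) : p.degree < n :=
  h.1.trans_lt (WithBot.coe_lt_coe.2 hmn)

theorem ne_zero (h : HasTopTerm p n r) (hr : r ≠ 0) : p ≠ 0 := by
  rintro rfl
  exact hr h.2.symm

theorem add (hp : HasTopTerm p n r) (hq : HasTopTerm q n s) : HasTopTerm (p + q) n (r + s) :=
  ⟨(degree_add_le p q).trans (max_le hp.1 hq.1), by
    rw [AddMonoidAlgebra.coeff_add, Finsupp.add_apply, hp.2, hq.2]⟩

theorem add_of_degree_lt (hp : HasTopTerm p n r) (hq : q.degree < n) :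
    HasTopTerm (p + q) n r := by
  simpa using hp.add ⟨hq.le, coeff_eq_zero_of_degree_lt hq⟩

theorem mul (hp : HasTopTerm p m r) (hq : HasTopTerm q n s) :
    HasTopTerm (p * q) (m + n) (r * s) := by
  refine ⟨(degree_mul_le p q).trans (by rw [WithBot.coe_add]; exact add_le_add hp.1 hq.1), ?_⟩
  rw [AddMonoidAlgebra.coeff_mul_add_of_uniqueAdd, hp.2, hq.2]
  intro a b ha hb hab
  have ha' : a ≤ m := WithBot.coe_le_coe.1 ((Finset.le_max ha).trans hp.1)
  have hb' : b ≤ n := WithBot.coe_le_coe.1 ((Finset.le_max hb).trans hq.1)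
  omega

theorem pow (hp : HasTopTerm p n r) (k : ℕ) : HasTopTerm (p ^ k) (k * n) (r ^ k) := by
  induction k with
  | zero => simpa using hasTopTerm_T (R := R) 0
  | succ k ih => simpa [pow_succ, add_mul] using ih.mul hp

end HasTopTerm

end TopTerm

theorem hasTopTerm_T_add_sq_sub {R : Type*} [CommRing R] {V : R[T;T⁻¹]} {m n : ℤ} {v : R}
    (hV : HasTopTerm V m v) (hmn : m < n) :
    HasTopTerm ((T n + V) ^ 2 - T (2 * n)) (n + m) (2 * v) := by
  have hVV : (V * V).degree < ↑(n + m) := (hV.mul hV).degree_lt (by omega)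
  have key : (T n + V) ^ 2 - T (2 * n) = C 2 * T n * V + V * V := by
    rw [two_mul n, T_add, map_ofNat]
    ring
  rw [key]
  exact ((hasTopTerm_C_mul_T 2 n).mul hV).add_of_degree_lt hVV

section Twist

variable {R : Type*} [CommSemiring R]

/-- The substitution `ξ ↦ ξ t`, where `ξ = Polynomial.X`. -/
def twist : R[X][T;T⁻¹] →+* R[X][T;T⁻¹] :=
  AddMonoidAlgebra.liftNCRingHom (Polynomial.eval₂RingHom (C.comp Polynomial.C) (C X * T 1))
    (AddMonoidAlgebra.of R[X] ℤ) fun _ _ => Commute.all _ _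

theorem twist_C_mul_T (p : R[X]) (n : ℤ) :
    twist (C p * T n) = p.eval₂ (C.comp Polynomial.C) (C X * T 1) * T n := by
  rw [← single_eq_C_mul_T]
  exact AddMonoidAlgebra.liftNC_single _ _ _ _

theorem twist_T (n : ℤ) : twist (T n : R[X][T;T⁻¹]) = T n := by
  simpa using twist_C_mul_T (1 : R[X]) n

theorem twist_C_C (c : R) : twist (C (Polynomial.C c)) = C (Polynomial.C c) := by
  simpa using twist_C_mul_T (Polynomial.C c) 0

theorem twist_C_X : twist (C X : R[X][T;T⁻¹]) = C X * T 1 := by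
  simpa using twist_C_mul_T (X : R[X]) 0

theorem twist_C_monomial_mul_T (i : ℕ) (c : R) (n : ℤ) :
    twist (C (monomial i c) * T n) = C (monomial i c) * T (i + n) := by
  rw [twist_C_mul_T, eval₂_monomial, mul_pow, T_pow, T_add, ← C_mul_X_pow_eq_monomial, map_mul,
    map_pow, mul_one, RingHom.comp_apply]
  ring

theorem coeff_coeff_twist (p : R[X][T;T⁻¹]) (n : ℤ) (e : ℕ) :
    ((twist p).coeff n).coeff e = (p.coeff (n - e)).coeff e := by
  induction p using LaurentPolynomial.induction_on' with
  | add p q hp hq =>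
    simp only [map_add, AddMonoidAlgebra.coeff_add, Finsupp.add_apply, Polynomial.coeff_add, hp,
      hq]
  | C_mul_T k a =>
    induction a using Polynomial.induction_on' with
    | add a b ha hb =>
      simp only [map_add, add_mul, AddMonoidAlgebra.coeff_add, Finsupp.add_apply,
        Polynomial.coeff_add, ha, hb]
    | monomial i c =>
      rw [twist_C_monomial_mul_T, ← single_eq_C_mul_T, ← single_eq_C_mul_T]
      simp only [AddMonoidAlgebra.coeff_single, Finsupp.single_apply]
      split_ifs <;> simp only [Polynomial.coeff_zero, Polynomial.coeff_monomial] <;> split_ifs <;>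
        first | rfl | omega

end Twist

end LaurentPolynomial

theorem le_degt {p : LPt} {k : ℤ} (hk : p.coeff k ≠ 0) : k ≤ degt p :=
  le_csSup (p.coeff.support.finite_toSet.bddAbove.mono fun _ => Finsupp.mem_support_iff.2) hk

theorem LaurentPolynomial.HasTopTerm.degt_eq {p : LPt} {n : ℤ} {r : ℂ[X]} (h : HasTopTerm p n r)
    (hr : r ≠ 0) : degt p = n :=
  IsGreatest.csSup_eq ⟨by rwa [Set.mem_ofPred_eq, h.2], fun _ hk =>
    not_lt.1 fun hnk => hk (degree_le_iff_coeff_eq_zero.1 h.1 _ hnk)⟩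

theorem sub_natDegree_coeff_twist_le_degt {p : LPt} {M : ℤ} (hM : (twist p).coeff M ≠ 0) :
    M - ((twist p).coeff M).natDegree ≤ degt p :=
  le_degt fun h => hM <| leadingCoeff_eq_zero.1 <| by
    rw [leadingCoeff, coeff_coeff_twist, h, coeff_zero]

def evalSq : ℂ[X] →+* LPt := eval₂RingHom (LaurentPolynomial.C.comp Polynomial.C) (T 2)

theorem hasTopTerm_evalSq (a : ℂ[X]) :
    HasTopTerm (evalSq a) (a.natDegree * 2) (Polynomial.C a.leadingCoeff) := by
  have hsum : evalSq a = ∑ i ∈ Finset.range a.natDegree,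
      LaurentPolynomial.C (Polynomial.C (a.coeff i)) * T (i * 2) +
      LaurentPolynomial.C (Polynomial.C a.leadingCoeff) * T (a.natDegree * 2) := by
    conv_lhs => rw [a.as_sum_range_C_mul_X_pow]
    simp [evalSq, Finset.sum_range_succ, T_pow, eval₂_finsetSum]
  have hlow : (∑ i ∈ Finset.range a.natDegree,
      LaurentPolynomial.C (Polynomial.C (a.coeff i)) * T (i * 2) : LPt).degree <
        ↑(a.natDegree * 2 : ℤ) := by
    refine AddMonoidAlgebra.supDegree_sum_le.trans_lt <|
      (Finset.sup_lt_iff (WithBot.bot_lt_coe _)).2 fun i hi => ?_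
    rw [Finset.mem_range] at hi
    exact (hasTopTerm_C_mul_T _ _).degree_lt (by omega)
  rw [hsum, add_comm]
  exact (hasTopTerm_C_mul_T _ _).add_of_degree_lt hlow

def evalY (W : LPt) : ℂ[X][X] →+* LPt := eval₂RingHom evalSq W

theorem exists_hasTopTerm_evalY_of_natDegree_le_one {W : LPt} (hW : HasTopTerm W 5 1)
    {r : ℂ[X][X]} (hr : r ≠ 0) (hr1 : r.natDegree ≤ 1) :
    ∃ M c, c ≠ 0 ∧ HasTopTerm (evalY W r) M (Polynomial.C c) ∧
      (r.coeff 0).natDegree * 2 ≤ M ∧ (r.coeff 1 ≠ 0 → 5 ≤ M) := by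
  set a := r.coeff 0
  set b := r.coeff 1
  have hr_eq : r = Polynomial.C b * X + Polynomial.C a := eq_X_add_C_of_natDegree_le_one hr1
  have heval : evalY W r = evalSq b * W + evalSq a := by
    rw [hr_eq]
    simp [evalY]
  have ha := hasTopTerm_evalSq a
  rw [heval]
  rcases eq_or_ne b 0 with hb | hb
  · have ha0 : a ≠ 0 := fun ha0 => hr (by rw [hr_eq, ha0, hb]; simp)
    refine ⟨_, a.leadingCoeff, leadingCoeff_ne_zero.2 ha0, ?_, le_rfl, fun h => (h hb).elim⟩
    rw [hb, map_zero, zero_mul, zero_add]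
    exact ha
  have hbW := (hasTopTerm_evalSq b).mul hW
  rw [mul_one] at hbW
  rcases lt_or_gt_of_ne (show (a.natDegree : ℤ) * 2 ≠ b.natDegree * 2 + 5 by omega) with h | h
  · exact ⟨_, b.leadingCoeff, leadingCoeff_ne_zero.2 hb, hbW.add_of_degree_lt (ha.degree_lt h),
      h.le, fun _ => by omega⟩
  · have ha0 : a ≠ 0 := fun ha0 => by rw [ha0, natDegree_zero] at h; omega
    refine ⟨_, a.leadingCoeff, leadingCoeff_ne_zero.2 ha0, ?_, le_rfl, fun _ => by omega⟩
    rw [add_comm]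
    exact ha.add_of_degree_lt (hbW.degree_lt h)

def keyForm : ℂ[X][X] := X ^ 2 - Polynomial.C (X ^ 5)

theorem monic_keyForm : keyForm.Monic := monic_X_pow_sub_C _ two_ne_zero

theorem natDegree_keyForm : keyForm.natDegree = 2 := natDegree_X_pow_sub_C

theorem evalY_keyForm (W : LPt) : evalY W keyForm = W ^ 2 - T 10 := by
  simp only [evalY, keyForm, evalSq, map_sub, map_pow, coe_eval₂RingHom, eval₂_X,
    Polynomial.eval₂_C, T_pow]
  norm_num

def twistedY : LPt := T 5 + LaurentPolynomial.C (1 + X) * T (-2)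

theorem hasTopTerm_twistedY : HasTopTerm twistedY 5 1 :=
  (hasTopTerm_T 5).add_of_degree_lt ((hasTopTerm_C_mul_T _ _).degree_lt (by norm_num))

theorem hasTopTerm_evalY_twistedY_keyForm :
    HasTopTerm (evalY twistedY keyForm) 3 (2 * (1 + X)) := by
  rw [evalY_keyForm, show (10 : ℤ) = 2 * 5 by norm_num]
  exact hasTopTerm_T_add_sq_sub (hasTopTerm_C_mul_T _ _) (by norm_num)

theorem exists_hasTopTerm_evalY_twistedY_add_keyForm_mul {r q : ℂ[X][X]} (hr1 : r.natDegree ≤ 1)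
    {M : ℤ} {w : ℂ[X]} (hw : w ≠ 0) (hq : HasTopTerm (evalY twistedY q) M w) :
    ∃ M' w', w' ≠ 0 ∧ HasTopTerm (evalY twistedY (r + keyForm * q)) M' w' ∧
      M - w.natDegree + 2 ≤ M' - w'.natDegree := by
  have hgq := hasTopTerm_evalY_twistedY_keyForm.mul hq
  have hdeg : (2 * (1 + X) * w).natDegree = w.natDegree + 1 := by
    have h : (2 * (1 + X) : ℂ[X]).natDegree = 1 := by compute_degree!
    rw [natDegree_mul (by rintro h0; simp [h0] at h) hw, h, add_comm]
  have hgw : 2 * (1 + X) * w ≠ 0 := fun h0 => by simp [h0] at hdeg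
  rw [map_add, map_mul]
  rcases eq_or_ne r 0 with rfl | hr0
  · refine ⟨3 + M, _, hgw, by simpa using hgq, by omega⟩
  obtain ⟨Mr, c, hc, hrtop, -, -⟩ :=
    exists_hasTopTerm_evalY_of_natDegree_le_one hasTopTerm_twistedY hr0 hr1
  rcases lt_trichotomy Mr (3 + M) with h | rfl | h
  · refine ⟨3 + M, _, hgw, ?_, by omega⟩
    rw [add_comm]
    exact hgq.add_of_degree_lt (hrtop.degree_lt h)
  · have hsum : (Polynomial.C c + 2 * (1 + X) * w).natDegree = w.natDegree + 1 := by
      rw [natDegree_add_eq_right_of_natDegree_lt] <;> simp [hdeg]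
    refine ⟨_, _, fun h0 => by simp [h0] at hsum, hrtop.add hgq, by omega⟩
  · refine ⟨Mr, Polynomial.C c, Polynomial.C_ne_zero.2 hc,
      hrtop.add_of_degree_lt (hgq.degree_lt h), ?_⟩
    rw [natDegree_C]
    omega

theorem natDegree_modByMonic_keyForm_le (f : ℂ[X][X]) : (f %ₘ keyForm).natDegree ≤ 1 := by
  have := natDegree_modByMonic_lt f monic_keyForm fun h => by simpa [h] using natDegree_keyForm
  rw [natDegree_keyForm] at this
  omega

theorem exists_hasTopTerm_evalY_twistedY (f : ℂ[X][X]) (hf : f ≠ 0) :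
    ∃ M w, w ≠ 0 ∧ HasTopTerm (evalY twistedY f) M w ∧ (w.natDegree : ℤ) ≤ M ∧
      ((¬ ∃ c, f = Polynomial.C (Polynomial.C c)) → w.natDegree + 2 ≤ M) := by
  by_cases hf1 : f.natDegree ≤ 1
  · obtain ⟨M, c, hc, htop, ha, hb⟩ :=
      exists_hasTopTerm_evalY_of_natDegree_le_one hasTopTerm_twistedY hf hf1
    refine ⟨M, _, Polynomial.C_ne_zero.2 hc, htop, by simp; omega, fun hnc => ?_⟩
    rw [natDegree_C, Nat.cast_zero, zero_add]
    by_contra hM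
    have h1 : f.coeff 1 = 0 := by_contra fun h => hM (by linarith [hb h])
    have h0 : (f.coeff 0).natDegree = 0 := by omega
    refine hnc ⟨(f.coeff 0).coeff 0, ?_⟩
    rw [eq_X_add_C_of_natDegree_le_one hf1, h1, eq_C_of_natDegree_eq_zero h0]
    simp
  · have hdiv := modByMonic_add_div f keyForm
    have hq : f /ₘ keyForm ≠ 0 := fun hq => hf1 (by
      rw [← hdiv, hq, mul_zero, add_zero]
      exact natDegree_modByMonic_keyForm_le f)
    obtain ⟨M, w, hw, htop, hM, -⟩ := exists_hasTopTerm_evalY_twistedY (f /ₘ keyForm) hq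
    obtain ⟨M', w', hw', htop', hgap⟩ :=
      exists_hasTopTerm_evalY_twistedY_add_keyForm_mul (natDegree_modByMonic_keyForm_le f) hw htop
    rw [hdiv] at htop'
    exact ⟨M', w', hw', htop', by omega, fun _ => by omega⟩
termination_by f.natDegree
decreasing_by rw [natDegree_divByMonic f monic_keyForm, natDegree_keyForm]; omega

theorem twist_comp_evalSq : twist.comp evalSq = evalSq := by
  refine ringHom_ext (fun c => ?_) ?_
  · simp [evalSq, twist_C_C]
  · simp [evalSq, twist_T]

theorem twist_evalY (W : LPt) (F : ℂ[X][X]) : twist (evalY W F) = evalY (twist W) F := by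
  rw [evalY, evalY, coe_eval₂RingHom, coe_eval₂RingHom, hom_eval₂, twist_comp_evalSq]

theorem Phi_X_zero : Phi (MvPolynomial.X 0) = T 2 := by
  simp [Phi]

theorem Phi_X_one :
    Phi (MvPolynomial.X 1) = T 5 + T (-2) + LaurentPolynomial.C X * T (-3) := by
  simp [Phi]

theorem Phi_C (c : ℂ) : Phi (MvPolynomial.C c) = LaurentPolynomial.C (Polynomial.C c) := by
  simp [Phi]

theorem twist_Phi_X_one : twist (Phi (MvPolynomial.X 1)) = twistedY := by
  rw [Phi_X_one, twistedY, map_add, map_add, twist_T, twist_T, map_mul, twist_C_X, twist_T,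
    mul_assoc, ← T_add, map_add, map_one, add_mul, one_mul, add_assoc]
  norm_num

def toMv : ℂ[X][X] →+* Pxy :=
  eval₂RingHom (eval₂RingHom MvPolynomial.C (MvPolynomial.X 0)) (MvPolynomial.X 1)

theorem toMv_C_C (c : ℂ) : toMv (Polynomial.C (Polynomial.C c)) = MvPolynomial.C c := by
  simp [toMv]

theorem toMv_surjective : Function.Surjective toMv := by
  intro p
  induction p using MvPolynomial.induction_on with
  | C c => exact ⟨_, toMv_C_C c⟩
  | add p q hp hq =>
    obtain ⟨F, rfl⟩ := hp
    obtain ⟨G, rfl⟩ := hq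
    exact ⟨F + G, map_add _ _ _⟩
  | mul_X p i hp =>
    obtain ⟨F, rfl⟩ := hp
    fin_cases i
    · exact ⟨F * Polynomial.C X, by simp [toMv]⟩
    · exact ⟨F * X, by simp [toMv]⟩

theorem Phi_toMv (F : ℂ[X][X]) : Phi (toMv F) = evalY (Phi (MvPolynomial.X 1)) F := by
  change (Phi : Pxy →+* LPt).comp toMv F = _
  congr 1
  refine ringHom_ext' (ringHom_ext (fun c => ?_) ?_) ?_
  · simp [toMv, evalY, evalSq]
  · simp [toMv, evalY, evalSq, Phi_X_zero]
  · simp [toMv, evalY]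

theorem two_le_degt_evalY {F : ℂ[X][X]} (hF : ¬ ∃ c, F = Polynomial.C (Polynomial.C c)) :
    2 ≤ degt (evalY (Phi (MvPolynomial.X 1)) F) := by
  obtain ⟨M, w, hw, htop, -, hgap⟩ :=
    exists_hasTopTerm_evalY_twistedY F fun h => hF ⟨0, by simp [h]⟩
  have hle := sub_natDegree_coeff_twist_le_degt (p := evalY (Phi (MvPolynomial.X 1)) F) (M := M)
  rw [twist_evalY, twist_Phi_X_one, htop.2] at hle
  linarith [hle hw, hgap hF]

theorem evalY_ne_zero {F : ℂ[X][X]} (hF : F ≠ 0) : evalY (Phi (MvPolynomial.X 1)) F ≠ 0 := by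
  obtain ⟨M, w, hw, htop, -⟩ := exists_hasTopTerm_evalY_twistedY F hF
  intro h
  apply htop.ne_zero hw
  rw [← twist_Phi_X_one, ← twist_evalY, h, map_zero]

theorem hasTopTerm_Phi_X_zero_pow_mul (α β : ℕ) :
    HasTopTerm (Phi (MvPolynomial.X 0 ^ α * (MvPolynomial.X 1 ^ 2 - MvPolynomial.X 0 ^ 5) ^ β))
      (α * 2 + β * 3) (2 ^ β) := by
  have hY : HasTopTerm (T (-2) + LaurentPolynomial.C X * T (-3) : LPt) (-2) 1 :=
    (hasTopTerm_T _).add_of_degree_lt ((hasTopTerm_C_mul_T _ _).degree_lt (by norm_num))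
  have hg : HasTopTerm (Phi (MvPolynomial.X 1 ^ 2 - MvPolynomial.X 0 ^ 5)) 3 2 := by
    rw [map_sub, map_pow, map_pow, Phi_X_one, Phi_X_zero, T_pow, add_assoc]
    simpa using hasTopTerm_T_add_sq_sub hY (by norm_num : (-2 : ℤ) < 5)
  rw [map_mul, map_pow, map_pow, Phi_X_zero]
  simpa using ((hasTopTerm_T 2).pow α).mul (hg.pow β)

theorem exists_degt_Phi_eq {m : ℤ} (hm : 2 ≤ m) :
    ∃ f : Pxy, (¬ ∃ c : ℂ, f = MvPolynomial.C c) ∧ m = degt (Phi f) := by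
  obtain ⟨α, β, hαβ⟩ : ∃ α β : ℕ, (α : ℤ) * 2 + β * 3 = m := by
    rcases Int.even_or_odd m with ⟨k, hk⟩ | ⟨k, hk⟩
    · exact ⟨k.toNat, 0, by omega⟩
    · exact ⟨(k - 1).toNat, 1, by omega⟩
  have htop := hasTopTerm_Phi_X_zero_pow_mul α β
  have h2 : (2 : ℂ[X]) ^ β ≠ 0 := pow_ne_zero _ two_ne_zero
  refine ⟨_, ?_, by rw [htop.degt_eq h2, hαβ]⟩
  rintro ⟨c, hc⟩
  apply h2
  rw [← htop.2, hc, Phi_C]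
  exact coeff_eq_zero_of_degree_lt ((hasTopTerm_C _).degree_lt (by omega))

theorem semigroup_of_values :
    Function.Injective Phi ∧
    {m : ℤ | ∃ f : Pxy, (¬ ∃ c : ℂ, f = MvPolynomial.C c) ∧ m = degt (Phi f)} =
      {m : ℤ | 2 ≤ m} := by
  refine ⟨(injective_iff_map_eq_zero Phi).2 fun f hf => ?_,
    Set.ext fun m => ⟨?_, exists_degt_Phi_eq⟩⟩
  · obtain ⟨F, rfl⟩ := toMv_surjective f
    rw [Phi_toMv] at hf
    rw [not_imp_not.1 evalY_ne_zero hf, map_zero]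
  · rintro ⟨f, hf, rfl⟩
    obtain ⟨F, rfl⟩ := toMv_surjective f
    rw [Phi_toMv]
    exact two_le_degt_evalY fun ⟨c, hc⟩ => hf ⟨c, by rw [hc, toMv_C_C]⟩
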